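/- The kernel of the cyclic gradient equals the kernel of the cyclic symmetrization: a polynomial P ∈ K⟨n⟩ satisfies δ_j P = 0 for all 1 ≤ j ≤ n if and only if C P = 0. -/

import Mathlib

/-! Setup: the free associative algebra `K⟨X_1,…,X_n⟩` realized as the monoid
algebra of the free monoid on `Fin n`, together with the partial cyclic
derivatives `δ_j`, the number operator `N` and the cyclic symmetrization `C`. -/

noncomputable section

/-- `K⟨n⟩`, the ring of polynomials in `n` noncommuting indeterminates. -/
abbrev FreePoly (K : Type) [CommSemiring K] (n : ℕ) : Type :=
  MonoidAlgebra K (FreeMonoid (Fin n))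

/-- The monomial `X_{i_1} ⋯ X_{i_p}` associated to the word `w = [i_1,…,i_p]`. -/
def mono (K : Type) [Field K] {n : ℕ} (w : List (Fin n)) : FreePoly K n :=
  MonoidAlgebra.single (FreeMonoid.ofList w) 1

/-- The indeterminate `X k`. -/
def Xvar (K : Type) [Field K] {n : ℕ} (k : Fin n) : FreePoly K n := mono K [k]

variable {K : Type} [Field K] [CharZero K] {n : ℕ}

/-- The partial cyclic derivative `δ_j = μ̃ ∘ ∂_j`: on a monomial
`X_{i_0} ⋯ X_{i_s}` it gives `∑_{p : i_p = j} X_{i_{p+1}} ⋯ X_{i_s} X_{i_0} ⋯ X_{i_{p-1}}`. -/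
def cycDeriv (j : Fin n) : FreePoly K n →ₗ[K] FreePoly K n :=
  (Finsupp.lsum K fun w => LinearMap.toSpanSingleton K _
    (∑ p : Fin (FreeMonoid.toList w).length,
      if (FreeMonoid.toList w).get p = j then
        mono K ((FreeMonoid.toList w).drop (p + 1) ++ (FreeMonoid.toList w).take p)
      else 0)) ∘ₗ (MonoidAlgebra.coeffLinearEquiv K).toLinearMap

/-- The number operator `N`, multiplying a monomial by its degree. -/
def numOp : FreePoly K n →ₗ[K] FreePoly K n :=
  (Finsupp.lsum K fun w => LinearMap.toSpanSingleton K _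
    ((FreeMonoid.toList w).length • mono K (FreeMonoid.toList w))) ∘ₗ
    (MonoidAlgebra.coeffLinearEquiv K).toLinearMap

/-- The cyclic symmetrization `C`, sending a monomial of degree `p ≥ 1` to the
sum of its `p` cyclic rotations (and `1` to `0`). -/
def cycSym : FreePoly K n →ₗ[K] FreePoly K n :=
  (Finsupp.lsum K fun w => LinearMap.toSpanSingleton K _
    (∑ p ∈ Finset.range (FreeMonoid.toList w).length,
      mono K ((FreeMonoid.toList w).rotate (p + 1)))) ∘ₗ
    (MonoidAlgebra.coeffLinearEquiv K).toLinearMap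

end

/-! In one direction, `C = ∑ⱼ Xⱼ δⱼ`. In the other, each `δⱼ` is invariant under cyclic rotation
of monomials, so `δⱼ ∘ C = δⱼ ∘ N` with `N` the number operator; and `δⱼ` lowers degrees by one,
so `δⱼ ∘ N = (N + 1) ∘ δⱼ`. In characteristic zero `N + 1` is injective, hence `C P = 0` forces
`δⱼ P = 0`. -/

theorem lsum_toSpanSingleton_comp_coeffLinearEquiv_single_one {R M N : Type*} [CommSemiring R]
    [AddCommMonoid N] [Module R N] (g : M → N) (m : M) :
    ((Finsupp.lsum R fun w => LinearMap.toSpanSingleton R N (g w)) ∘ₗ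
      (MonoidAlgebra.coeffLinearEquiv R).toLinearMap) (MonoidAlgebra.single m 1) = g m := by
  simp [MonoidAlgebra.coeffLinearEquiv]

theorem sum_range_length_rotate_succ {α M : Type*} [AddCommMonoid M] (f : List α → M)
    (l : List α) :
    ∑ p ∈ Finset.range l.length, f (l.rotate (p + 1)) =
      ∑ p ∈ Finset.range l.length, f (l.rotate p) := by
  cases h : l.length with
  | zero => rfl
  | succ k =>
    rw [Finset.sum_range_succ, Finset.sum_range_succ', ← h, List.rotate_length,
      List.rotate_zero]

section

variable {K : Type} [Field K] {n : ℕ}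

theorem single_eq_smul_mono (w : FreeMonoid (Fin n)) (c : K) :
    MonoidAlgebra.single w c = c • mono K (FreeMonoid.toList w) := by
  simp [mono]

theorem FreePoly.linearMap_ext {M : Type*} [AddCommMonoid M] [Module K M]
    {f g : FreePoly K n →ₗ[K] M} (h : ∀ l, f (mono K l) = g (mono K l)) : f = g :=
  MonoidAlgebra.lhom_ext' fun w => LinearMap.ext_ring (by simpa [mono] using h w.toList)

theorem mono_cons (i : Fin n) (l : List (Fin n)) : mono K (i :: l) = Xvar K i * mono K l := by
  simp only [Xvar, mono, MonoidAlgebra.single_mul_single, one_mul]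
  rfl

/-- `δⱼ` of the monomial of `l`, indexed by `Finset.range` so that sums over `a ++ b` split by
`Finset.sum_range_add`. -/
noncomputable def cycDerivWord (j : Fin n) (l : List (Fin n)) : FreePoly K n :=
  ∑ p ∈ Finset.range l.length,
    if l[p]? = some j then mono K (l.drop (p + 1) ++ l.take p) else 0

theorem cycDeriv_mono (j : Fin n) (l : List (Fin n)) :
    cycDeriv j (mono K l) = cycDerivWord j l := by
  rw [cycDeriv, mono, lsum_toSpanSingleton_comp_coeffLinearEquiv_single_one, cycDerivWord,
    FreeMonoid.toList_ofList, ← Fin.sum_univ_eq_sum_range]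
  simp

theorem cycSym_mono (l : List (Fin n)) :
    cycSym (mono K l) = ∑ p ∈ Finset.range l.length, mono K (l.rotate (p + 1)) := by
  rw [cycSym, mono, lsum_toSpanSingleton_comp_coeffLinearEquiv_single_one,
    FreeMonoid.toList_ofList]

theorem numOp_mono (l : List (Fin n)) : numOp (mono K l) = l.length • mono K l := by
  rw [numOp, mono, lsum_toSpanSingleton_comp_coeffLinearEquiv_single_one,
    FreeMonoid.toList_ofList]
  rfl

theorem coeff_numOp (P : FreePoly K n) (w : FreeMonoid (Fin n)) :
    (numOp P).coeff w = (FreeMonoid.toList w).length * P.coeff w := by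
  induction P using MonoidAlgebra.induction_linear with
  | zero => simp
  | add P Q hP hQ => simp [hP, hQ, mul_add]
  | single v c =>
    rw [single_eq_smul_mono, map_smul, numOp_mono]
    by_cases h : v = w
    · subst h; simp [mono, mul_comm]
    · simp [mono, Finsupp.single_eq_of_ne' h]

theorem cycDerivWord_append (j : Fin n) (a b : List (Fin n)) :
    cycDerivWord (K := K) j (a ++ b) =
      (∑ p ∈ Finset.range a.length,
        if a[p]? = some j then mono K (a.drop (p + 1) ++ b ++ a.take p) else 0) +
      ∑ q ∈ Finset.range b.length,
        if b[q]? = some j then mono K (b.drop (q + 1) ++ a ++ b.take q) else 0 := by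
  rw [cycDerivWord, List.length_append, Finset.sum_range_add]
  congr 1
  · refine Finset.sum_congr rfl fun p hp => ?_
    have hp : p < a.length := Finset.mem_range.mp hp
    rw [List.getElem?_append_left hp, List.drop_append_of_le_length hp,
      List.take_append_of_le_length hp.le, List.append_assoc]
  · refine Finset.sum_congr rfl fun q _ => ?_
    rw [List.getElem?_append_right (Nat.le_add_right _ _), Nat.add_sub_cancel_left, add_assoc,
      List.drop_length_add_append, List.take_length_add_append, List.append_assoc]

theorem cycDerivWord_append_comm (j : Fin n) (a b : List (Fin n)) :
    cycDerivWord (K := K) j (a ++ b) = cycDerivWord j (b ++ a) := by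
  rw [cycDerivWord_append, cycDerivWord_append, add_comm]

theorem cycDerivWord_rotate (j : Fin n) (l : List (Fin n)) (k : ℕ) :
    cycDerivWord (K := K) j (l.rotate k) = cycDerivWord j l := by
  rw [List.rotate_eq_drop_append_take_mod, cycDerivWord_append_comm, List.take_append_drop]

theorem numOp_cycDerivWord_add (j : Fin n) (l : List (Fin n)) :
    numOp (cycDerivWord (K := K) j l) + cycDerivWord j l = l.length • cycDerivWord j l := by
  simp only [cycDerivWord, map_sum, Finset.smul_sum, ← Finset.sum_add_distrib]
  refine Finset.sum_congr rfl fun p hp => ?_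
  have hp : p < l.length := Finset.mem_range.mp hp
  split_ifs
  · rw [numOp_mono, ← succ_nsmul]
    congr 1
    simp only [List.length_append, List.length_drop, List.length_take]
    omega
  · simp

theorem mono_rotate_eq_Xvar_mul (l : List (Fin n)) {p : ℕ} (hp : p < l.length) :
    mono K (l.rotate p) = Xvar K l[p] * mono K (l.drop (p + 1) ++ l.take p) := by
  rw [List.rotate_eq_drop_append_take hp.le, ← List.getElem_cons_drop hp, List.cons_append,
    mono_cons]

theorem cycDeriv_cycSym (j : Fin n) (P : FreePoly K n) :
    cycDeriv j (cycSym P) = cycDeriv j (numOp P) := by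
  suffices cycDeriv j ∘ₗ cycSym = cycDeriv (K := K) j ∘ₗ numOp from LinearMap.congr_fun this P
  refine FreePoly.linearMap_ext fun l => ?_
  simp only [LinearMap.comp_apply, cycSym_mono, numOp_mono, map_sum, map_nsmul, cycDeriv_mono,
    cycDerivWord_rotate, Finset.sum_const, Finset.card_range]

theorem cycDeriv_numOp (j : Fin n) (P : FreePoly K n) :
    cycDeriv j (numOp P) = numOp (cycDeriv j P) + cycDeriv j P := by
  suffices cycDeriv j ∘ₗ numOp = (numOp + LinearMap.id) ∘ₗ cycDeriv (K := K) j from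
    LinearMap.congr_fun this P
  refine FreePoly.linearMap_ext fun l => ?_
  simp only [LinearMap.comp_apply, numOp_mono, map_nsmul, cycDeriv_mono, LinearMap.add_apply,
    LinearMap.id_apply, numOp_cycDerivWord_add]

theorem cycSym_eq_sum_Xvar_mul_cycDeriv (P : FreePoly K n) :
    cycSym P = ∑ j : Fin n, Xvar K j * cycDeriv j P := by
  suffices cycSym = ∑ j : Fin n, LinearMap.mulLeft K (Xvar K j) ∘ₗ cycDeriv j by
    simp [this]
  refine FreePoly.linearMap_ext fun l => ?_
  simp only [cycSym_mono, LinearMap.sum_apply, LinearMap.comp_apply, LinearMap.mulLeft_apply,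
    cycDeriv_mono, cycDerivWord, Finset.mul_sum, mul_ite, mul_zero]
  rw [sum_range_length_rotate_succ (mono K), Finset.sum_comm]
  refine Finset.sum_congr rfl fun p hp => ?_
  have hp : p < l.length := Finset.mem_range.mp hp
  simp [List.getElem?_eq_getElem hp, mono_rotate_eq_Xvar_mul l hp]

end

variable {K : Type} [Field K] [CharZero K] {n : ℕ}

theorem eq_zero_of_numOp_add_self_eq_zero {P : FreePoly K n} (hP : numOp P + P = 0) : P = 0 := by
  refine MonoidAlgebra.coeff_inj.1 (Finsupp.ext fun w => ?_)
  have h := congrArg (fun Q : FreePoly K n => Q.coeff w) hP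
  simp only [MonoidAlgebra.coeff_add, Finsupp.add_apply, coeff_numOp, ← add_one_mul,
    MonoidAlgebra.coeff_zero, Finsupp.coe_zero, Pi.zero_apply] at h
  simpa [Nat.cast_add_one_ne_zero] using h

theorem cycDeriv_eq_zero_iff_cycSym_eq_zero (P : FreePoly K n) :
    (∀ j : Fin n, cycDeriv j P = 0) ↔ cycSym P = 0 := by
  refine ⟨fun h => by simp [cycSym_eq_sum_Xvar_mul_cycDeriv, h], fun h j => ?_⟩
  refine eq_zero_of_numOp_add_self_eq_zero ?_
  rw [← cycDeriv_numOp, ← cycDeriv_cycSym, h, map_zero]
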